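/- arXiv:1710.04772 — 5 statements merged into one kernel-verified Lean document; each statement's English description precedes it below -/
import Mathlib

section
/- Let G = (V,E) be an undirected connected simple graph on n vertices with every vertex of positive degree. Define α = (1/n)·Σ_{(i,j)∈E} 2/(T_ij + 2), where T_ij is the number of common neighbors of i and j, the local clustering coefficient c_i = |{(j,k)∈E : (i,j)∈E, (i,k)∈E}| / (d_i(d_i−1)/2) for each vertex i of degree d_i ≥ 2 (and c_i = 0 if d_i ≤ 1), and the clustering coefficient c = (1/n)·Σ_{i∈V} c_i. Then α ≥ 1 / (4c + (2/n)·Σ_{i∈V} 1/d_i). -/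
open Finset

/-- The number of common neighbors of the endpoints of an (unordered) edge. -/
def edgeCommonNbrs {V : Type*} [Fintype V] [DecidableEq V]
    (G : SimpleGraph V) [DecidableRel G.Adj] : Sym2 V → ℕ :=
  Sym2.lift ⟨fun i j => (G.neighborFinset i ∩ G.neighborFinset j).card,
    fun i j => by simp [Finset.inter_comm]⟩

/-- The parameter `α = (1/n) Σ_{(i,j)∈E} 2/(T_ij + 2)`, the sum running over unordered edges. -/
noncomputable def alphaParam {V : Type*} [Fintype V] [DecidableEq V]
    (G : SimpleGraph V) [DecidableRel G.Adj] : ℝ :=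
  (Fintype.card V : ℝ)⁻¹ * ∑ e ∈ G.edgeFinset, 2 / ((edgeCommonNbrs G e : ℝ) + 2)

/-- The number of triangles of `G` containing the vertex `i` (each unordered pair of adjacent
neighbors is counted twice among ordered pairs, whence the division by `2`). -/
noncomputable def triangleCount {V : Type*} [Fintype V] [DecidableEq V]
    (G : SimpleGraph V) [DecidableRel G.Adj] (i : V) : ℝ :=
  (((G.neighborFinset i ×ˢ G.neighborFinset i).filter fun p => G.Adj p.1 p.2).card : ℝ) / 2

/-- The local clustering coefficient of a vertex `i`: the number of triangles containing `i`
divided by `d_i (d_i - 1)/2`, with the convention `c_i = 0` when `d_i ≤ 1`. -/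
noncomputable def localClusteringCoeff {V : Type*} [Fintype V] [DecidableEq V]
    (G : SimpleGraph V) [DecidableRel G.Adj] (i : V) : ℝ :=
  if 2 ≤ G.degree i then
    triangleCount G i / ((G.degree i : ℝ) * ((G.degree i : ℝ) - 1) / 2)
  else 0

/-- The clustering coefficient of `G`: the average of the local clustering coefficients. -/
noncomputable def clusteringCoeff {V : Type*} [Fintype V] [DecidableEq V]
    (G : SimpleGraph V) [DecidableRel G.Adj] : ℝ :=
  (Fintype.card V : ℝ)⁻¹ * ∑ i : V, localClusteringCoeff G i

section Aux

variable {V : Type*} [Fintype V] [DecidableEq V] (G : SimpleGraph V) [DecidableRel G.Adj]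

private lemma sum_darts_edge' (f : Sym2 V → ℝ) :
    ∑ d : G.Dart, f d.edge = 2 * ∑ e ∈ G.edgeFinset, f e := by
  rw [← Finset.sum_fiberwise_of_maps_to (g := SimpleGraph.Dart.edge) (t := G.edgeFinset)
    (fun d _ => by simp), Finset.mul_sum]
  refine Finset.sum_congr rfl fun e he => ?_
  have hcard := G.dart_edge_fiber_card e (by rwa [← SimpleGraph.mem_edgeFinset])
  calc ∑ d ∈ Finset.univ.filter (fun d : G.Dart => d.edge = e), f d.edge
      = ∑ d ∈ Finset.univ.filter (fun d : G.Dart => d.edge = e), f e :=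
        Finset.sum_congr rfl fun d hd => by rw [(Finset.mem_filter.1 hd).2]
    _ = 2 * f e := by rw [Finset.sum_const, hcard]; simp [nsmul_eq_mul]

private lemma sum_darts_fst' (f : Sym2 V → ℝ) :
    ∑ d : G.Dart, f d.edge = ∑ i : V, ∑ j ∈ G.neighborFinset i, f s(i, j) := by
  rw [← Finset.sum_fiberwise_of_maps_to (g := fun d : G.Dart => d.fst) (t := Finset.univ)
    (fun d _ => Finset.mem_univ _)]
  refine Finset.sum_congr rfl fun v _ => ?_
  rw [G.dart_fst_fiber v, Finset.sum_image (fun a _ b _ h => G.dartOfNeighborSet_injective v h)]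
  rw [show G.neighborFinset v = (G.neighborSet v).toFinset from rfl, ← Finset.sum_set_coe]
  rfl

private lemma two_mul_sum_edges (f : Sym2 V → ℝ) :
    2 * ∑ e ∈ G.edgeFinset, f e = ∑ i : V, ∑ j ∈ G.neighborFinset i, f s(i, j) := by
  rw [← sum_darts_edge', sum_darts_fst']

private lemma nbr_swap (F : V → V → ℝ) :
    ∑ i : V, ∑ j ∈ G.neighborFinset i, F i j = ∑ j : V, ∑ i ∈ G.neighborFinset j, F i j := by
  simp only [SimpleGraph.neighborFinset_eq_filter, Finset.sum_filter]
  rw [Finset.sum_comm]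
  exact Finset.sum_congr rfl fun j _ => Finset.sum_congr rfl fun i _ => by
    simp only [SimpleGraph.adj_comm]

private lemma common_sum (i : V) :
    ∑ j ∈ G.neighborFinset i, ((G.neighborFinset i ∩ G.neighborFinset j).card : ℝ) =
      (((G.neighborFinset i ×ˢ G.neighborFinset i).filter fun p => G.Adj p.1 p.2).card : ℝ) := by
  rw [Finset.natCast_card_filter, Finset.sum_product]
  refine Finset.sum_congr rfl fun j _ => ?_
  rw [show G.neighborFinset i ∩ G.neighborFinset j
      = (G.neighborFinset i).filter (fun k => G.Adj j k) by
    ext k; simp [SimpleGraph.mem_neighborFinset, and_comm]]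
  rw [Finset.natCast_card_filter]

private lemma filter_card_eq_zero_of_degree_le_one (i : V) (h : G.degree i ≤ 1) :
    ((G.neighborFinset i ×ˢ G.neighborFinset i).filter fun p => G.Adj p.1 p.2).card = 0 := by
  rw [Finset.card_eq_zero, Finset.filter_eq_empty_iff]
  rintro ⟨a, b⟩ hab
  rw [Finset.mem_product] at hab
  have hcard : (G.neighborFinset i).card ≤ 1 := by
    rwa [SimpleGraph.card_neighborFinset_eq_degree]
  have hab2 : a = b := Finset.card_le_one.1 hcard a hab.1 b hab.2
  simp [hab2]

private lemma tri_vertex_bound (i : V) (hdeg : 0 < G.degree i) :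
    ((((G.neighborFinset i ×ˢ G.neighborFinset i).filter fun p => G.Adj p.1 p.2).card : ℝ)) *
      ((G.degree i : ℝ)⁻¹) ^ 2 ≤ localClusteringCoeff G i := by
  set F : ℝ := (((G.neighborFinset i ×ˢ G.neighborFinset i).filter
      fun p => G.Adj p.1 p.2).card : ℝ) with hF
  have hFnn : 0 ≤ F := Nat.cast_nonneg _
  by_cases h2 : 2 ≤ G.degree i
  · have hd : (2 : ℝ) ≤ (G.degree i : ℝ) := by exact_mod_cast h2
    have hd0 : (0 : ℝ) < (G.degree i : ℝ) := by linarith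
    have hd1 : (0 : ℝ) < (G.degree i : ℝ) - 1 := by linarith
    rw [localClusteringCoeff, if_pos h2, triangleCount, ← hF]
    have key1 : F / 2 / ((G.degree i : ℝ) * ((G.degree i : ℝ) - 1) / 2)
        = F / ((G.degree i : ℝ) * ((G.degree i : ℝ) - 1)) := by
      rw [div_div_div_cancel_right₀]
      norm_num
    have key2 : F * ((G.degree i : ℝ)⁻¹) ^ 2 = F / ((G.degree i : ℝ) * (G.degree i : ℝ)) := by
      rw [div_eq_mul_inv, mul_inv]; ring
    rw [key1, key2]
    apply div_le_div_of_nonneg_left hFnn (by positivity)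
    nlinarith
  · rw [localClusteringCoeff, if_neg h2]
    have : F = 0 := by
      rw [hF]
      exact_mod_cast filter_card_eq_zero_of_degree_le_one G i (by omega)
    rw [this, zero_mul]

end Aux

/-- For a connected graph on `n` vertices with all degrees positive,
`α ≥ 1 / (4c + (2/n) Σ_i 1/d_i)`. -/
theorem alphaParam_ge_inv_clustering
    {V : Type*} [Fintype V] [DecidableEq V]
    (G : SimpleGraph V) [DecidableRel G.Adj]
    (hconn : G.Connected) (hdeg : ∀ v : V, 0 < G.degree v) :
    alphaParam G ≥
      1 / (4 * clusteringCoeff G +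
        (2 / (Fintype.card V : ℝ)) * ∑ i : V, (G.degree i : ℝ)⁻¹) := by
  classical
  have hne : Nonempty V := hconn.nonempty
  set n : ℝ := (Fintype.card V : ℝ) with hn
  have hn0 : 0 < n := by
    rw [hn]; exact_mod_cast Fintype.card_pos
  have hd : ∀ i : V, (0 : ℝ) < (G.degree i : ℝ) := fun i => by exact_mod_cast hdeg i
  -- weight functions on edges
  set w : Sym2 V → ℝ := Sym2.lift ⟨fun i j => (G.degree i : ℝ)⁻¹ + (G.degree j : ℝ)⁻¹,
    fun i j => by ring⟩ with hw
  set u : Sym2 V → ℝ := Sym2.lift ⟨fun i j => ((G.degree i : ℝ)⁻¹) ^ 2 + ((G.degree j : ℝ)⁻¹) ^ 2,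
    fun i j => by ring⟩ with hu
  set T : Sym2 V → ℝ := fun e => (edgeCommonNbrs G e : ℝ) with hT
  set q : Sym2 V → ℝ := fun e => (T e + 2) / 2 * (w e) ^ 2 with hq
  have hT_nn : ∀ e, 0 ≤ T e := fun e => Nat.cast_nonneg _
  -- Identity: sum of w over edges is n
  have hsum_w : ∑ e ∈ G.edgeFinset, w e = n := by
    have h2 := two_mul_sum_edges G w
    have hlift : ∀ i j : V, w s(i, j) = (G.degree i : ℝ)⁻¹ + (G.degree j : ℝ)⁻¹ := fun i j => rfl
    have hinner : ∀ i : V, ∑ _j ∈ G.neighborFinset i, (G.degree i : ℝ)⁻¹ = 1 := fun i => by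
      rw [Finset.sum_const, SimpleGraph.card_neighborFinset_eq_degree, nsmul_eq_mul,
        mul_inv_cancel₀ (hd i).ne']
    have hrhs : ∑ i : V, ∑ j ∈ G.neighborFinset i, w s(i, j) = 2 * n := by
      simp only [hlift]
      rw [show (∑ i : V, ∑ j ∈ G.neighborFinset i,
            ((G.degree i : ℝ)⁻¹ + (G.degree j : ℝ)⁻¹)) =
          (∑ i : V, ∑ j ∈ G.neighborFinset i, (G.degree i : ℝ)⁻¹) +
          (∑ i : V, ∑ j ∈ G.neighborFinset i, (G.degree j : ℝ)⁻¹) by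
        simp [Finset.sum_add_distrib]]
      have hA : ∑ i : V, ∑ j ∈ G.neighborFinset i, (G.degree i : ℝ)⁻¹ = n := by
        simp only [hinner]
        rw [Finset.sum_const, Finset.card_univ, nsmul_eq_mul, mul_one, hn]
      have hB : ∑ i : V, ∑ j ∈ G.neighborFinset i, (G.degree j : ℝ)⁻¹ = n := by
        rw [nbr_swap]
        simp only [hinner]
        rw [Finset.sum_const, Finset.card_univ, nsmul_eq_mul, mul_one, hn]
      rw [hA, hB]; ring
    linarith [h2, hrhs]
  -- edge set is nonempty
  have hE_ne : G.edgeFinset.Nonempty := by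
    by_contra h
    rw [Finset.not_nonempty_iff_eq_empty] at h
    rw [h, Finset.sum_empty] at hsum_w
    linarith
  have hw_pos : ∀ e : Sym2 V, 0 < w e := fun e =>
    Sym2.inductionOn e fun i j => add_pos (inv_pos.2 (hd i)) (inv_pos.2 (hd j))
  have hq_pos : ∀ e : Sym2 V, 0 < q e :=
    fun e => mul_pos (div_pos (by linarith [hT_nn e]) two_pos) (pow_pos (hw_pos e) 2)
  set Q : ℝ := ∑ e ∈ G.edgeFinset, q e with hQ
  have hQpos : 0 < Q := Finset.sum_pos (fun e _ => hq_pos e) hE_ne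
  -- Engel form of Cauchy-Schwarz
  have hEngel : n ^ 2 / Q ≤ ∑ e ∈ G.edgeFinset, 2 / (T e + 2) := by
    have h := Finset.sq_sum_div_le_sum_sq_div G.edgeFinset w
      (g := q) (fun e _ => hq_pos e)
    rw [hsum_w] at h
    refine h.trans_eq (Finset.sum_congr rfl fun e he => ?_)
    have hw0 : (w e) ^ 2 ≠ 0 := pow_ne_zero 2 (hw_pos e).ne'
    have hqe : q e = w e ^ 2 * ((T e + 2) / 2) := by rw [hq]; ring
    rw [hqe, ← div_div, div_self hw0, one_div_div]
  -- pointwise bound on q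
  have hq_le : ∀ e : Sym2 V, q e ≤ (T e + 2) * u e := fun e => by
    induction e using Sym2.inductionOn with
    | hf i j =>
      have h1 : (0:ℝ) ≤ T s(i, j) := hT_nn _
      have h2 : q s(i, j) = (T s(i,j) + 2) / 2 *
          ((G.degree i : ℝ)⁻¹ + (G.degree j : ℝ)⁻¹) ^ 2 := rfl
      have h3 : u s(i, j) = ((G.degree i : ℝ)⁻¹) ^ 2 + ((G.degree j : ℝ)⁻¹) ^ 2 := rfl
      rw [h2, h3]
      nlinarith [sq_nonneg ((G.degree i : ℝ)⁻¹ - (G.degree j : ℝ)⁻¹)]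
  -- the sum of (T e + 2) * u e
  set F : V → ℝ := fun i => (((G.neighborFinset i ×ˢ G.neighborFinset i).filter
      fun p => G.Adj p.1 p.2).card : ℝ) with hFdef
  have hkey : 2 * ∑ e ∈ G.edgeFinset, (T e + 2) * u e =
      2 * ∑ i : V, (F i * ((G.degree i : ℝ)⁻¹) ^ 2 + 2 * (G.degree i : ℝ)⁻¹) := by
    rw [two_mul_sum_edges G (fun e => (T e + 2) * u e)]
    have hterm : ∀ i j : V, (T s(i, j) + 2) * u s(i, j) =
        (T s(i, j) + 2) * ((G.degree i : ℝ)⁻¹) ^ 2 +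
        (T s(i, j) + 2) * ((G.degree j : ℝ)⁻¹) ^ 2 := fun i j => by
      have h3 : u s(i, j) = ((G.degree i : ℝ)⁻¹) ^ 2 + ((G.degree j : ℝ)⁻¹) ^ 2 := rfl
      rw [h3]; ring
    simp only [hterm]
    rw [Finset.sum_congr rfl fun (i : V) _ => Finset.sum_add_distrib, Finset.sum_add_distrib]
    have hswap : ∑ i : V, ∑ j ∈ G.neighborFinset i, (T s(i, j) + 2) * ((G.degree j : ℝ)⁻¹) ^ 2
        = ∑ i : V, ∑ j ∈ G.neighborFinset i, (T s(i, j) + 2) * ((G.degree i : ℝ)⁻¹) ^ 2 := by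
      rw [nbr_swap G (fun i j => (T s(i, j) + 2) * ((G.degree j : ℝ)⁻¹) ^ 2)]
      refine Finset.sum_congr rfl fun j _ => Finset.sum_congr rfl fun i _ => ?_
      rw [Sym2.eq_swap]
    rw [hswap, ← two_mul]
    congr 1
    refine Finset.sum_congr rfl fun i _ => ?_
    have hTsum : ∑ j ∈ G.neighborFinset i, (T s(i, j) + 2) = F i + 2 * (G.degree i : ℝ) := by
      rw [Finset.sum_add_distrib]
      have hT1 : ∀ j : V, T s(i, j) = ((G.neighborFinset i ∩ G.neighborFinset j).card : ℝ) :=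
        fun j => rfl
      simp only [hT1]
      rw [common_sum G i, Finset.sum_const, SimpleGraph.card_neighborFinset_eq_degree,
        nsmul_eq_mul, hFdef]
      ring
    calc ∑ j ∈ G.neighborFinset i, (T s(i, j) + 2) * ((G.degree i : ℝ)⁻¹) ^ 2
        = (∑ j ∈ G.neighborFinset i, (T s(i, j) + 2)) * ((G.degree i : ℝ)⁻¹) ^ 2 :=
          (Finset.sum_mul _ _ _).symm
      _ = (F i + 2 * (G.degree i : ℝ)) * ((G.degree i : ℝ)⁻¹) ^ 2 := by rw [hTsum]
      _ = F i * ((G.degree i : ℝ)⁻¹) ^ 2 + 2 * (G.degree i : ℝ)⁻¹ := by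
          have : (G.degree i : ℝ) * ((G.degree i : ℝ)⁻¹) ^ 2 = (G.degree i : ℝ)⁻¹ := by
            rw [sq]; rw [← mul_assoc, mul_inv_cancel₀ (hd i).ne', one_mul]
          rw [add_mul, mul_assoc 2, this]
  have hc_nn : ∀ i : V, 0 ≤ localClusteringCoeff G i := fun i => by
    rw [localClusteringCoeff]
    split
    · have h2 : (2:ℝ) ≤ (G.degree i : ℝ) := by exact_mod_cast ‹2 ≤ G.degree i›
      apply div_nonneg
      · exact div_nonneg (Nat.cast_nonneg _) two_pos.le
      · nlinarith
    · exact le_refl 0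
  -- bound Q by the clustering sums
  set K : ℝ := 4 * ∑ i : V, localClusteringCoeff G i + 2 * ∑ i : V, (G.degree i : ℝ)⁻¹ with hK
  have hQK : Q ≤ K := by
    have step1 : Q ≤ ∑ e ∈ G.edgeFinset, (T e + 2) * u e :=
      Finset.sum_le_sum fun e _ => hq_le e
    have step2 : ∑ e ∈ G.edgeFinset, (T e + 2) * u e =
        ∑ i : V, (F i * ((G.degree i : ℝ)⁻¹) ^ 2 + 2 * (G.degree i : ℝ)⁻¹) := by
      linarith [hkey]
    have step3 : ∑ i : V, (F i * ((G.degree i : ℝ)⁻¹) ^ 2 + 2 * (G.degree i : ℝ)⁻¹) ≤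
        ∑ i : V, (localClusteringCoeff G i + 2 * (G.degree i : ℝ)⁻¹) := by
      refine Finset.sum_le_sum fun i _ => ?_
      have := tri_vertex_bound G i (hdeg i)
      simp only [hFdef]
      linarith [this]
    have step4 : ∑ i : V, (localClusteringCoeff G i + 2 * (G.degree i : ℝ)⁻¹) ≤ K := by
      rw [Finset.sum_add_distrib, hK, ← Finset.mul_sum]
      have : 0 ≤ ∑ i : V, localClusteringCoeff G i :=
        Finset.sum_nonneg fun i _ => hc_nn i
      linarith
    exact step1.trans (step2.le.trans (step3.trans step4))
  have hKpos : 0 < K := lt_of_lt_of_le hQpos hQK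
  -- final assembly
  have hden : 4 * clusteringCoeff G +
      (2 / (Fintype.card V : ℝ)) * ∑ i : V, (G.degree i : ℝ)⁻¹ = K / n := by
    rw [clusteringCoeff, hK, ← hn]
    field_simp
  rw [hden, one_div_div]
  have halpha : alphaParam G = n⁻¹ * ∑ e ∈ G.edgeFinset, 2 / (T e + 2) := rfl
  rw [ge_iff_le, halpha]
  have h1 : n / K ≤ n / Q := div_le_div_of_nonneg_left hn0.le hQpos hQK
  have h2 : n / Q = n⁻¹ * (n ^ 2 / Q) := by
    field_simp
  have h3 : n⁻¹ * (n ^ 2 / Q) ≤ n⁻¹ * ∑ e ∈ G.edgeFinset, 2 / (T e + 2) :=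
    mul_le_mul_of_nonneg_left hEngel (inv_nonneg.2 hn0.le)
  linarith
end

section
/- Let G = (V,E) be an undirected connected simple graph, (i,j) ∈ E an edge, and T_ij the number of common neighbors of i and j. Let L_G be the Laplacian of G and L_G⁺ its Moore–Penrose pseudoinverse. Then the effective resistance of the edge satisfies (e_i − e_j)^T L_G⁺ (e_i − e_j) ≤ 2/(T_ij + 2). -/
/-!
The effective resistance is at most the energy of any unit flow from `i` to `j` (Thomson's
principle, obtained by completing the square against the potential flow `Bᵀ L⁺ B f`). Route
`2/(T+2)` of the current through the edge `ij` and `1/(T+2)` through each path `i k j` over a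
common neighbour `k`: these routes use pairwise distinct edges, so the energy is
`(2/(T+2))² + T · 2 · (1/(T+2))² = 2/(T+2)`.
-/

open Matrix

/-- `M` is the Moore–Penrose pseudoinverse of `L`: the four Penrose conditions. -/
def IsMoorePenroseInverse {V : Type*} [Fintype V] [DecidableEq V]
    (L M : Matrix V V ℝ) : Prop :=
  L * M * L = L ∧ M * L * M = M ∧ (L * M)ᵀ = L * M ∧ (M * L)ᵀ = M * L

open Finset

theorem IsMoorePenroseInverse.transpose_eq_self {n : Type*} [Fintype n] [DecidableEq n]
    {L M : Matrix n n ℝ} (hL : Lᵀ = L) (hM : IsMoorePenroseInverse L M) : Mᵀ = M := by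
  obtain ⟨hLML, hMLM, hLM, hML⟩ := hM
  have hMtL : Mᵀ * L = L * M := by rw [← hLM, transpose_mul, hL]
  have hLMt : L * Mᵀ = M * L := by rw [← hML, transpose_mul, hL]
  have hMML : M = M * M * L := calc
    M = M * (Mᵀ * L) := by rw [hMtL, ← mul_assoc, hMLM]
    _ = M * Mᵀ * (L * M * L) := by rw [hLML, mul_assoc]
    _ = M * (Mᵀ * L) * (M * L) := by simp only [mul_assoc]
    _ = M * (L * M) * (M * L) := by rw [hMtL]
    _ = M * M * L := by rw [← mul_assoc M L M, hMLM]; simp only [mul_assoc]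
  have hM : M = M * L * Mᵀ := by rw [mul_assoc, hLMt, ← mul_assoc]; exact hMML
  calc Mᵀ = (M * L * Mᵀ)ᵀ := by rw [← hM]
    _ = M * L * Mᵀ := by rw [transpose_mul, transpose_mul, transpose_transpose, hL, mul_assoc]
    _ = M := hM.symm

namespace Matrix

variable {n m ι : Type*} [Fintype n] [Fintype m]

theorem thomson_principle {L M : Matrix n n ℝ} (B : Matrix n m ℝ) {c : ℝ} (hc : 0 < c)
    (hB : ∀ y, (Bᵀ *ᵥ y) ⬝ᵥ (Bᵀ *ᵥ y) = c * (y ⬝ᵥ L *ᵥ y))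
    (hMT : Mᵀ = M) (hMLM : M * L * M = M) (f : m → ℝ) :
    (B *ᵥ f) ⬝ᵥ M *ᵥ (B *ᵥ f) ≤ c * (f ⬝ᵥ f) := by
  set x := B *ᵥ f
  set p := Bᵀ *ᵥ (M *ᵥ x)
  have hfp : x ⬝ᵥ M *ᵥ x = f ⬝ᵥ p := by rw [dotProduct_mulVec f, vecMul_transpose]
  have hpp : p ⬝ᵥ p = c * (f ⬝ᵥ p) := by
    rw [hB, ← hfp]
    congr 1
    calc (M *ᵥ x) ⬝ᵥ L *ᵥ (M *ᵥ x) = x ⬝ᵥ Mᵀ *ᵥ (L *ᵥ (M *ᵥ x)) := by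
          rw [dotProduct_mulVec x, vecMul_transpose]
      _ = x ⬝ᵥ M *ᵥ x := by rw [hMT, mulVec_mulVec, mulVec_mulVec, hMLM]
  have hsq : 0 ≤ (c • f - p) ⬝ᵥ (c • f - p) := sum_nonneg fun _ _ => mul_self_nonneg _
  simp only [sub_dotProduct, dotProduct_sub, smul_dotProduct, dotProduct_smul, smul_eq_mul,
    dotProduct_comm p f, hpp] at hsq
  rw [hfp]
  nlinarith

theorem sum_dotProduct_sum_of_pairwise {s : Finset ι} {v : ι → n → ℝ}
    (h : ∀ k ∈ s, ∀ l ∈ s, k ≠ l → v k ⬝ᵥ v l = 0) :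
    (∑ k ∈ s, v k) ⬝ᵥ (∑ k ∈ s, v k) = ∑ k ∈ s, v k ⬝ᵥ v k := by
  rw [sum_dotProduct]
  refine sum_congr rfl fun k hk => ?_
  rw [dotProduct_sum, sum_eq_single k (fun l hl hlk => h k hk l hl hlk.symm)
    (fun hk' => absurd hk hk')]

end Matrix

section

variable {V : Type*} [Fintype V] [DecidableEq V]

def edgeFlow (a b : V) : V × V → ℝ := Pi.single (a, b) 1 - Pi.single (b, a) 1

theorem edgeFlow_dotProduct_self {a b : V} (h : a ≠ b) : edgeFlow a b ⬝ᵥ edgeFlow a b = 2 := by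
  simp [edgeFlow, dotProduct_sub, h, h.symm]
  norm_num

theorem edgeFlow_dotProduct_edgeFlow {a b c d : V} (h : s(a, b) ≠ s(c, d)) :
    edgeFlow a b ⬝ᵥ edgeFlow c d = 0 := by
  rw [Ne, Sym2.eq_iff] at h
  simp only [edgeFlow, dotProduct_sub, sub_dotProduct, single_dotProduct, Pi.single_apply,
    Prod.ext_iff]
  grind

namespace SimpleGraph

variable (G : SimpleGraph V) [DecidableRel G.Adj]

/-- Column `(a, b)` is `e_a - e_b` when `a ∼ b` and `0` otherwise: every edge appears in both
orientations, whence `B Bᵀ = 2 L`. -/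
def orientedIncMatrix : Matrix V (V × V) ℝ :=
  Matrix.of fun v p => if G.Adj p.1 p.2 then (Pi.single p.1 1 - Pi.single p.2 1 : V → ℝ) v else 0

theorem orientedIncMatrix_transpose_mulVec (y : V → ℝ) (p : V × V) :
    ((G.orientedIncMatrix)ᵀ *ᵥ y) p = if G.Adj p.1 p.2 then y p.1 - y p.2 else 0 := by
  simp only [mulVec, transpose_apply, dotProduct, orientedIncMatrix, of_apply]
  split_ifs
  · simp [sub_mul, sum_sub_distrib, Pi.single_apply]
  · simp

theorem orientedIncMatrix_transpose_mulVec_dotProduct_self (y : V → ℝ) :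
    ((G.orientedIncMatrix)ᵀ *ᵥ y) ⬝ᵥ ((G.orientedIncMatrix)ᵀ *ᵥ y)
      = 2 * (y ⬝ᵥ G.lapMatrix ℝ *ᵥ y) := by
  have hL : y ⬝ᵥ G.lapMatrix ℝ *ᵥ y
      = (∑ a, ∑ b, if G.Adj a b then (y a - y b) ^ 2 else 0) / 2 := by
    rw [← toLinearMap₂'_apply', lapMatrix_toLinearMap₂']
  rw [hL, mul_div_cancel₀ _ two_ne_zero, dotProduct, ← Fintype.sum_prod_type']
  refine sum_congr rfl fun p _ => ?_
  rw [orientedIncMatrix_transpose_mulVec]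
  split_ifs <;> ring

theorem orientedIncMatrix_mulVec_edgeFlow {a b : V} (h : G.Adj a b) :
    G.orientedIncMatrix *ᵥ edgeFlow a b = (2 : ℝ) • (Pi.single a 1 - Pi.single b 1) := by
  ext v
  simp [orientedIncMatrix, edgeFlow, mulVec_sub, h, h.symm, Pi.single_apply]
  ring

theorem dotProduct_mulVec_le_of_isMoorePenroseInverse {M : Matrix V V ℝ}
    (hM : IsMoorePenroseInverse (G.lapMatrix ℝ) M) (f : V × V → ℝ) :
    (G.orientedIncMatrix *ᵥ f) ⬝ᵥ M *ᵥ (G.orientedIncMatrix *ᵥ f) ≤ 2 * (f ⬝ᵥ f) :=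
  thomson_principle _ two_pos G.orientedIncMatrix_transpose_mulVec_dotProduct_self
    (hM.transpose_eq_self (G.isSymm_lapMatrix ℝ)) hM.2.1 f

/-- `2 (T + 2)` times the unit flow described above: each `edgeFlow` carries current in both
orientations of its edge. -/
def commonNeighborFlow (i j : V) : V × V → ℝ :=
  (2 : ℝ) • edgeFlow i j +
    ∑ k ∈ G.neighborFinset i ∩ G.neighborFinset j, (edgeFlow i k + edgeFlow k j)

theorem orientedIncMatrix_mulVec_commonNeighborFlow {i j : V} (h : G.Adj i j) :
    G.orientedIncMatrix *ᵥ G.commonNeighborFlow i j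
      = (2 * (#(G.neighborFinset i ∩ G.neighborFinset j) + 2 : ℝ)) •
          (Pi.single i 1 - Pi.single j 1) := by
  have hpath : ∀ k ∈ G.neighborFinset i ∩ G.neighborFinset j,
      G.orientedIncMatrix *ᵥ (edgeFlow i k + edgeFlow k j)
        = (2 : ℝ) • (Pi.single i 1 - Pi.single j 1) := by
    intro k hk
    rw [mem_inter, mem_neighborFinset, mem_neighborFinset] at hk
    rw [mulVec_add, G.orientedIncMatrix_mulVec_edgeFlow hk.1,
      G.orientedIncMatrix_mulVec_edgeFlow hk.2.symm]
    module
  rw [commonNeighborFlow, mulVec_add, mulVec_smul, mulVec_sum, sum_congr rfl hpath, sum_const,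
    G.orientedIncMatrix_mulVec_edgeFlow h]
  module

theorem commonNeighborFlow_dotProduct_self {i j : V} (h : G.Adj i j) :
    G.commonNeighborFlow i j ⬝ᵥ G.commonNeighborFlow i j
      = 4 * (#(G.neighborFinset i ∩ G.neighborFinset j) + 2 : ℝ) := by
  have hij := G.ne_of_adj h
  have hS : ∀ k ∈ G.neighborFinset i ∩ G.neighborFinset j, i ≠ k ∧ j ≠ k := by
    intro k hk
    rw [mem_inter, mem_neighborFinset, mem_neighborFinset] at hk
    exact ⟨G.ne_of_adj hk.1, G.ne_of_adj hk.2⟩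
  have hpath : ∀ k ∈ G.neighborFinset i ∩ G.neighborFinset j,
      (edgeFlow i k + edgeFlow k j) ⬝ᵥ (edgeFlow i k + edgeFlow k j) = 4 := by
    intro k hk
    obtain ⟨hik, hjk⟩ := hS k hk
    simp [add_dotProduct, dotProduct_add, edgeFlow_dotProduct_self, edgeFlow_dotProduct_edgeFlow,
      hij, hik, hjk, hij.symm, hik.symm, hjk.symm]
    norm_num
  have hpaths : ∀ k ∈ G.neighborFinset i ∩ G.neighborFinset j,
      ∀ l ∈ G.neighborFinset i ∩ G.neighborFinset j, k ≠ l →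
        (edgeFlow i k + edgeFlow k j) ⬝ᵥ (edgeFlow i l + edgeFlow l j) = 0 := by
    intro k hk l hl hkl
    obtain ⟨hik, hjk⟩ := hS k hk
    obtain ⟨hil, hjl⟩ := hS l hl
    simp [add_dotProduct, dotProduct_add, edgeFlow_dotProduct_edgeFlow, hij, hil, hjl, hkl,
      hik.symm, hjk.symm]
  have hedge : (∑ k ∈ G.neighborFinset i ∩ G.neighborFinset j, (edgeFlow i k + edgeFlow k j))
      ⬝ᵥ edgeFlow i j = 0 := by
    refine (sum_dotProduct _ _ _).trans (sum_eq_zero fun k hk => ?_)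
    obtain ⟨hik, hjk⟩ := hS k hk
    simp [add_dotProduct, edgeFlow_dotProduct_edgeFlow, hij, hij.symm, hik.symm, hjk.symm]
  rw [commonNeighborFlow, add_dotProduct, dotProduct_add, dotProduct_add, smul_dotProduct,
    smul_dotProduct, dotProduct_smul, dotProduct_smul, edgeFlow_dotProduct_self hij,
    dotProduct_comm (edgeFlow i j), hedge, sum_dotProduct_sum_of_pairwise hpaths,
    sum_congr rfl hpath, sum_const, smul_eq_mul, smul_eq_mul, smul_eq_mul, nsmul_eq_mul]
  ring

end SimpleGraph

end

theorem effective_resistance_le_two_div_common_neighbors_general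
    {V : Type*} [Fintype V] [DecidableEq V]
    (G : SimpleGraph V) [DecidableRel G.Adj]
    (i j : V) (hadj : G.Adj i j)
    (M : Matrix V V ℝ) (hM : IsMoorePenroseInverse (G.lapMatrix ℝ) M) :
    (Pi.single i 1 - Pi.single j 1) ⬝ᵥ M *ᵥ (Pi.single i 1 - Pi.single j 1)
      ≤ 2 / (((G.neighborFinset i ∩ G.neighborFinset j).card : ℝ) + 2) := by
  have henergy := G.dotProduct_mulVec_le_of_isMoorePenroseInverse hM (G.commonNeighborFlow i j)
  rw [G.orientedIncMatrix_mulVec_commonNeighborFlow hadj,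
    G.commonNeighborFlow_dotProduct_self hadj, mulVec_smul, smul_dotProduct, dotProduct_smul,
    smul_eq_mul, smul_eq_mul] at henergy
  rw [le_div_iff₀ (by positivity)]
  nlinarith

/-- For an edge `(i,j)` of a connected graph `G` with `T_ij` common
neighbors of `i` and `j`, the effective resistance satisfies
`(e_i − e_j)ᵀ L_G⁺ (e_i − e_j) ≤ 2/(T_ij + 2)`. -/
theorem effective_resistance_le_two_div_common_neighbors
    {V : Type*} [Fintype V] [DecidableEq V]
    (G : SimpleGraph V) [DecidableRel G.Adj] (hconn : G.Connected)
    (i j : V) (hadj : G.Adj i j)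
    (M : Matrix V V ℝ) (hM : IsMoorePenroseInverse (G.lapMatrix ℝ) M) :
    (Pi.single i 1 - Pi.single j 1) ⬝ᵥ M *ᵥ (Pi.single i 1 - Pi.single j 1)
      ≤ 2 / (((G.neighborFinset i ∩ G.neighborFinset j).card : ℝ) + 2) :=
  effective_resistance_le_two_div_common_neighbors_general G i j hadj M hM
end

section
/- Let G = (V,E) be an undirected connected simple graph on n vertices in which every vertex has positive degree, and let κ_0 > 0. For each vertex i let m_i be the uniform probability measure on the set N_i of neighbors of i, and for adjacent i and j let W_1(m_i, m_j) = inf over all probability measures ξ on V×V with marginals m_i and m_j of Σ_{(k,k')} d(k,k')·ξ(k,k'), where d is the shortest-path distance in G. Suppose that for every edge (i,j) ∈ E the Ollivier–Ricci curvature κ(i,j) = 1 − W_1(m_i,m_j)/d(i,j) = 1 − W_1(m_i,m_j) satisfies κ(i,j) ≥ κ_0. Then α = (1/n)·Σ_{(i,j)∈E} 2/(T_ij + 2) ≤ 1/κ_0, where T_ij is the number of common neighbors of i and j. -/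
open Finset

/-- The uniform probability measure on the neighbors of `v`: mass `1/d_v` on each neighbor. -/
noncomputable def uniformNbrMeasure {V : Type*} [Fintype V] [DecidableEq V]
    (G : SimpleGraph V) [DecidableRel G.Adj] (v : V) : V → ℝ :=
  fun k => if k ∈ G.neighborFinset v then (G.degree v : ℝ)⁻¹ else 0

/-- The optimal transportation (Wasserstein-1) distance between two probability measures on the
vertex set of `G`, with cost given by the shortest-path distance: the infimum over all couplings
`ξ` of the total transport cost `Σ_{(k,k')} d(k,k') ξ(k,k')`. -/
noncomputable def wassersteinW1 {V : Type*} [Fintype V] [DecidableEq V]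
    (G : SimpleGraph V) (μ ν : V → ℝ) : ℝ :=
  sInf {c : ℝ | ∃ ξ : V × V → ℝ,
    (∀ p, 0 ≤ ξ p) ∧
    (∀ k, ∑ k' : V, ξ (k, k') = μ k) ∧
    (∀ k', ∑ k : V, ξ (k, k') = ν k') ∧
    c = ∑ p : V × V, (G.dist p.1 p.2 : ℝ) * ξ p}

section Aux

variable {V : Type*} [Fintype V] [DecidableEq V]

lemma uniformNbrMeasure_nonneg (G : SimpleGraph V) [DecidableRel G.Adj] (v k : V) :
    0 ≤ uniformNbrMeasure G v k := by
  unfold uniformNbrMeasure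
  split <;> positivity

lemma uniformNbrMeasure_sum (G : SimpleGraph V) [DecidableRel G.Adj] (v : V)
    (h : 0 < G.degree v) : ∑ k : V, uniformNbrMeasure G v k = 1 := by
  unfold uniformNbrMeasure
  rw [Finset.sum_ite_mem, Finset.univ_inter, Finset.sum_const,
    SimpleGraph.card_neighborFinset_eq_degree, nsmul_eq_mul]
  field_simp

/-- Kantorovich duality (easy direction): a 1-Lipschitz function gives a lower bound on `W₁`. -/
lemma le_wassersteinW1 (G : SimpleGraph V) (μ ν : V → ℝ) (f : V → ℝ)
    (hf : ∀ k k', f k - f k' ≤ (G.dist k k' : ℝ))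
    (hμ0 : ∀ k, 0 ≤ μ k) (hν0 : ∀ k, 0 ≤ ν k)
    (hμ1 : ∑ k : V, μ k = 1) (hν1 : ∑ k : V, ν k = 1) :
    ∑ k : V, f k * μ k - ∑ k : V, f k * ν k ≤ wassersteinW1 G μ ν := by
  apply le_csInf
  · refine ⟨_, fun p => μ p.1 * ν p.2, fun p => mul_nonneg (hμ0 _) (hν0 _), ?_, ?_, rfl⟩
    · intro k; simp only []; rw [← Finset.mul_sum, hν1, mul_one]
    · intro k'; simp only []; rw [← Finset.sum_mul, hμ1, one_mul]
  · rintro c ⟨ξ, hpos, h1, h2, rfl⟩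
    calc ∑ k : V, f k * μ k - ∑ k : V, f k * ν k
        = ∑ p : V × V, (f p.1 - f p.2) * ξ p := by
          simp_rw [sub_mul, Finset.sum_sub_distrib]
          congr 1
          · rw [Fintype.sum_prod_type]
            simp_rw [← Finset.mul_sum]
            exact Finset.sum_congr rfl fun k _ => by rw [h1 k]
          · rw [Fintype.sum_prod_type_right]
            simp_rw [← Finset.mul_sum]
            exact Finset.sum_congr rfl fun k _ => by rw [h2 k]
      _ ≤ ∑ p : V × V, (G.dist p.1 p.2 : ℝ) * ξ p :=
          Finset.sum_le_sum fun p _ => mul_le_mul_of_nonneg_right (hf _ _) (hpos p)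

/-- Summing a symmetric function over edges, doubled, equals summing over all darts. -/
lemma dart_sum (G : SimpleGraph V) [DecidableRel G.Adj]
    (h : V → V → ℝ) (hs : ∀ i j, h i j = h j i) :
    2 * ∑ e ∈ G.edgeFinset, Sym2.lift ⟨h, hs⟩ e
      = ∑ v : V, ∑ w ∈ G.neighborFinset v, h v w := by
  have lhs : ∑ d : G.Dart, Sym2.lift ⟨h, hs⟩ d.edge
      = 2 * ∑ e ∈ G.edgeFinset, Sym2.lift ⟨h, hs⟩ e := by
    rw [← Finset.sum_fiberwise_of_maps_to (s := Finset.univ) (t := G.edgeFinset)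
      (g := SimpleGraph.Dart.edge)
      (fun d _ => by rw [SimpleGraph.mem_edgeFinset]; exact d.edge_mem)
      (fun d => Sym2.lift ⟨h, hs⟩ d.edge)]
    rw [Finset.mul_sum]
    refine Finset.sum_congr rfl fun e he => ?_
    have step : ∑ d ∈ Finset.filter (fun d : G.Dart => d.edge = e) Finset.univ,
        Sym2.lift ⟨h, hs⟩ d.edge
        = ∑ _d ∈ Finset.filter (fun d : G.Dart => d.edge = e) Finset.univ,
          Sym2.lift ⟨h, hs⟩ e :=
      Finset.sum_congr rfl fun d hd => by rw [(Finset.mem_filter.mp hd).2]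
    rw [step, Finset.sum_const, nsmul_eq_mul,
      show (Finset.filter (fun d : G.Dart => d.edge = e) Finset.univ) =
        ({d : G.Dart | d.edge = e} : Finset _) from rfl,
      SimpleGraph.dart_edge_fiber_card G e (SimpleGraph.mem_edgeFinset.mp he)]
    norm_num
  have rhs : ∑ d : G.Dart, Sym2.lift ⟨h, hs⟩ d.edge
      = ∑ v : V, ∑ w ∈ G.neighborFinset v, h v w := by
    have hF : ∀ d : G.Dart, Sym2.lift ⟨h, hs⟩ d.edge = h d.fst d.snd := fun d => rfl
    simp_rw [hF]
    rw [← Finset.sum_fiberwise_of_maps_to (s := Finset.univ) (t := Finset.univ)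
      (g := fun d : G.Dart => d.fst)
      (fun d _ => Finset.mem_univ d.fst)
      (fun d : G.Dart => h d.fst d.snd)]
    refine Finset.sum_congr rfl fun v _ => ?_
    rw [show (Finset.filter (fun d : G.Dart => d.fst = v) Finset.univ) =
      ({d : G.Dart | d.fst = v} : Finset _) from rfl, SimpleGraph.dart_fst_fiber,
      Finset.sum_image (fun a _ b _ hab => G.dartOfNeighborSet_injective v hab)]
    exact (Finset.sum_subtype (G.neighborFinset v)
      (fun w => G.mem_neighborFinset v w) (fun w => h v w)).symm
  rw [← lhs, rhs]

/-- The key per-edge estimate: `κ₀ ≤ (T_ij + 2)/d_i`. -/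
lemma curv_le_aux (G : SimpleGraph V) [DecidableRel G.Adj]
    (hconn : G.Connected) (hdeg : ∀ v : V, 0 < G.degree v)
    (κ₀ : ℝ) (i j : V) (hadj : G.Adj i j)
    (hW : κ₀ ≤ 1 - wassersteinW1 G (uniformNbrMeasure G i) (uniformNbrMeasure G j)) :
    κ₀ * (G.degree i : ℝ) ≤ ((G.neighborFinset i ∩ G.neighborFinset j).card : ℝ) + 2 := by
  set f : V → ℝ := fun k => (G.dist k j : ℝ) with hfdef
  have hdi : (0:ℝ) < (G.degree i : ℝ) := by exact_mod_cast hdeg i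
  have hdj : (0:ℝ) < (G.degree j : ℝ) := by exact_mod_cast hdeg j
  have hf : ∀ k k', f k - f k' ≤ (G.dist k k' : ℝ) := by
    intro k k'
    have := hconn.dist_triangle (u := k) (v := k') (w := j)
    have : (G.dist k j : ℝ) ≤ (G.dist k k' : ℝ) + (G.dist k' j : ℝ) := by exact_mod_cast this
    simp only [hfdef]
    linarith
  -- ∑ f · m_j = 1
  have hmj : ∑ k : V, f k * uniformNbrMeasure G j k = 1 := by
    unfold uniformNbrMeasure
    simp_rw [mul_ite, mul_zero, Finset.sum_ite_mem, Finset.univ_inter]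
    have : ∀ k ∈ G.neighborFinset j, f k * (G.degree j : ℝ)⁻¹ = (G.degree j : ℝ)⁻¹ := by
      intro k hk
      have hadjk : G.Adj k j := ((G.mem_neighborFinset j k).mp hk).symm
      have : G.dist k j = 1 := SimpleGraph.dist_eq_one_iff_adj.mpr hadjk
      simp [hfdef, this]
    rw [Finset.sum_congr rfl this, Finset.sum_const,
      SimpleGraph.card_neighborFinset_eq_degree, nsmul_eq_mul]
    field_simp
  -- lower bound for ∑ f · m_i
  set T : ℝ := ((G.neighborFinset i ∩ G.neighborFinset j).card : ℝ) with hT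
  have hmi : 2 - (T + 2) / (G.degree i : ℝ) ≤ ∑ k : V, f k * uniformNbrMeasure G i k := by
    unfold uniformNbrMeasure
    simp_rw [mul_ite, mul_zero, Finset.sum_ite_mem, Finset.univ_inter]
    have key : ∑ k ∈ G.neighborFinset i,
        ((2:ℝ) - 2 * (if k = j then (1:ℝ) else 0) - (if k ∈ G.neighborFinset j then (1:ℝ) else 0))
        ≤ ∑ k ∈ G.neighborFinset i, f k := by
      refine Finset.sum_le_sum fun k hk => ?_
      by_cases hkj : k = j
      · subst hkj
        have : G.dist k k = 0 := by simp
        simp [hfdef, this, SimpleGraph.irrefl]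
      · by_cases hkn : k ∈ G.neighborFinset j
        · have hadjk : G.Adj k j := ((G.mem_neighborFinset j k).mp hkn).symm
          have : G.dist k j = 1 := SimpleGraph.dist_eq_one_iff_adj.mpr hadjk
          simp only [hfdef, this, hkj, hkn, if_true, if_false]
          norm_num
        · have h0 : G.dist k j ≠ 0 := by
            have := hconn.pos_dist_of_ne (u := k) (v := j) hkj
            omega
          have h1 : G.dist k j ≠ 1 := by
            intro hc
            exact hkn ((G.mem_neighborFinset j k).mpr
              (SimpleGraph.dist_eq_one_iff_adj.mp hc).symm)
          have h2 : 2 ≤ G.dist k j := by omega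
          have : (2:ℝ) ≤ f k := by
            simp only [hfdef]; exact_mod_cast h2
          simp only [hkj, hkn, if_false, if_neg]
          norm_num
          linarith
    have e1 : ∑ k ∈ G.neighborFinset i, (if k = j then (1:ℝ) else 0) = 1 := by
      rw [Finset.sum_ite_eq' (G.neighborFinset i) j (fun _ => (1:ℝ))]
      simp [(G.mem_neighborFinset i j).mpr hadj]
    have e2 : ∑ k ∈ G.neighborFinset i, (if k ∈ G.neighborFinset j then (1:ℝ) else 0) = T := by
      rw [Finset.sum_ite_mem, Finset.sum_const, nsmul_eq_mul, mul_one, hT]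
    have e3 : ∑ k ∈ G.neighborFinset i,
        ((2:ℝ) - 2 * (if k = j then (1:ℝ) else 0) - (if k ∈ G.neighborFinset j then (1:ℝ) else 0))
        = 2 * (G.degree i : ℝ) - 2 - T := by
      rw [Finset.sum_sub_distrib, Finset.sum_sub_distrib, ← Finset.mul_sum, e1, e2,
        Finset.sum_const, SimpleGraph.card_neighborFinset_eq_degree, nsmul_eq_mul]
      ring
    rw [e3] at key
    have expand : ∑ k ∈ G.neighborFinset i, f k * (G.degree i : ℝ)⁻¹
        = (∑ k ∈ G.neighborFinset i, f k) * (G.degree i : ℝ)⁻¹ := by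
      rw [Finset.sum_mul]
    rw [expand]
    have heq : (2 * (G.degree i : ℝ) - 2 - T) * (G.degree i : ℝ)⁻¹
        = 2 - (T + 2) / (G.degree i : ℝ) := by
      field_simp
      ring
    have := mul_le_mul_of_nonneg_right key (inv_nonneg.mpr hdi.le)
    linarith [this, heq ▸ this]
  have dual := le_wassersteinW1 G (uniformNbrMeasure G i) (uniformNbrMeasure G j) f hf
    (uniformNbrMeasure_nonneg G i) (uniformNbrMeasure_nonneg G j)
    (uniformNbrMeasure_sum G i (hdeg i)) (uniformNbrMeasure_sum G j (hdeg j))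
  rw [hmj] at dual
  have hκ : κ₀ ≤ (T + 2) / (G.degree i : ℝ) := by linarith
  rw [hT]
  exact (le_div_iff₀ hdi).mp hκ

end Aux

/-- If the Ollivier–Ricci curvature `κ(i,j) = 1 − W₁(m_i, m_j)` (note that
`d(i,j) = 1` for an edge `(i,j)`) of every edge of a connected graph `G` with all degrees
positive is at least `κ₀ > 0`, then `α = (1/n) Σ_{(i,j)∈E} 2/(T_ij + 2) ≤ 1/κ₀`. -/
theorem alphaParam_le_inv_curvature
    {V : Type*} [Fintype V] [DecidableEq V]
    (G : SimpleGraph V) [DecidableRel G.Adj]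
    (hconn : G.Connected) (hdeg : ∀ v : V, 0 < G.degree v)
    (κ₀ : ℝ) (hκ₀ : 0 < κ₀)
    (hcurv : ∀ i j : V, G.Adj i j →
      κ₀ ≤ 1 - wassersteinW1 G (uniformNbrMeasure G i) (uniformNbrMeasure G j)) :
    alphaParam G ≤ 1 / κ₀ := by
  have : Nonempty V := hconn.nonempty
  have hn : (0:ℝ) < (Fintype.card V : ℝ) := by exact_mod_cast Fintype.card_pos
  set g : Sym2 V → ℝ := Sym2.lift ⟨fun i j => (G.degree i : ℝ)⁻¹ + (G.degree j : ℝ)⁻¹,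
    fun i j => add_comm _ _⟩ with hgdef
  -- the edge sum of `g` is `n`
  have hsum_g : ∑ e ∈ G.edgeFinset, g e = (Fintype.card V : ℝ) := by
    have h2 := dart_sum G (fun i j => (G.degree i : ℝ)⁻¹ + (G.degree j : ℝ)⁻¹)
      (fun i j => add_comm _ _)
    have inner1 : ∀ v : V, ∑ _w ∈ G.neighborFinset v, (G.degree v : ℝ)⁻¹ = 1 := by
      intro v
      rw [Finset.sum_const, SimpleGraph.card_neighborFinset_eq_degree, nsmul_eq_mul]
      have : ((G.degree v : ℝ)) ≠ 0 := by exact_mod_cast (hdeg v).ne'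
      field_simp
    have swap : ∑ v : V, ∑ w ∈ G.neighborFinset v, (G.degree w : ℝ)⁻¹
        = (Fintype.card V : ℝ) := by
      simp_rw [SimpleGraph.neighborFinset_eq_filter, Finset.sum_filter]
      rw [Finset.sum_comm]
      have inner2 : ∀ w : V, (∑ v : V, if G.Adj v w then (G.degree w : ℝ)⁻¹ else 0) = 1 := by
        intro w
        rw [← Finset.sum_filter]
        have hf : Finset.filter (fun v => G.Adj v w) Finset.univ = G.neighborFinset w := by
          ext v; simp [SimpleGraph.mem_neighborFinset, G.adj_comm]
        rw [hf, Finset.sum_const, SimpleGraph.card_neighborFinset_eq_degree, nsmul_eq_mul]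
        have : ((G.degree w : ℝ)) ≠ 0 := by exact_mod_cast (hdeg w).ne'
        field_simp
      simp_rw [inner2]
      simp
    have hone : ∑ v : V, (∑ _w ∈ G.neighborFinset v, (G.degree v : ℝ)⁻¹)
        = (Fintype.card V : ℝ) := by
      simp_rw [inner1]; simp
    simp_rw [Finset.sum_add_distrib] at h2
    rw [hone, swap] at h2
    rw [hgdef]
    linarith
  -- per-edge estimate
  have hedge : ∀ e ∈ G.edgeFinset, 2 / ((edgeCommonNbrs G e : ℝ) + 2) ≤ κ₀⁻¹ * g e := by
    intro e he
    induction e using Sym2.ind with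
    | _ i j =>
      have hadj : G.Adj i j := SimpleGraph.mem_edgeFinset.mp he
      have h1 := curv_le_aux G hconn hdeg κ₀ i j hadj (hcurv i j hadj)
      have h2 := curv_le_aux G hconn hdeg κ₀ j i hadj.symm (hcurv j i hadj.symm)
      rw [Finset.inter_comm] at h2
      have hE : (edgeCommonNbrs G s(i, j) : ℝ)
          = ((G.neighborFinset i ∩ G.neighborFinset j).card : ℝ) := rfl
      have hgE : g s(i, j) = (G.degree i : ℝ)⁻¹ + (G.degree j : ℝ)⁻¹ := rfl
      rw [hE, hgE]
      set T : ℝ := ((G.neighborFinset i ∩ G.neighborFinset j).card : ℝ) with hT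
      have hT0 : (0:ℝ) ≤ T := by rw [hT]; positivity
      have hdi : (0:ℝ) < (G.degree i : ℝ) := by exact_mod_cast hdeg i
      have hdj : (0:ℝ) < (G.degree j : ℝ) := by exact_mod_cast hdeg j
      have b1 : 1 / (T + 2) ≤ 1 / (κ₀ * (G.degree i : ℝ)) :=
        one_div_le_one_div_of_le (by positivity) h1
      have b2 : 1 / (T + 2) ≤ 1 / (κ₀ * (G.degree j : ℝ)) :=
        one_div_le_one_div_of_le (by positivity) h2
      have e1 : (1:ℝ) / (κ₀ * (G.degree i : ℝ)) = κ₀⁻¹ * (G.degree i : ℝ)⁻¹ := by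
        rw [one_div, mul_inv]
      have e2 : (1:ℝ) / (κ₀ * (G.degree j : ℝ)) = κ₀⁻¹ * (G.degree j : ℝ)⁻¹ := by
        rw [one_div, mul_inv]
      calc 2 / (T + 2) = 1 / (T + 2) + 1 / (T + 2) := by ring
        _ ≤ κ₀⁻¹ * (G.degree i : ℝ)⁻¹ + κ₀⁻¹ * (G.degree j : ℝ)⁻¹ := by
            rw [← e1, ← e2]; exact add_le_add b1 b2
        _ = κ₀⁻¹ * ((G.degree i : ℝ)⁻¹ + (G.degree j : ℝ)⁻¹) := by ring
  -- put it together
  have hsum : ∑ e ∈ G.edgeFinset, 2 / ((edgeCommonNbrs G e : ℝ) + 2)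
      ≤ κ₀⁻¹ * (Fintype.card V : ℝ) := by
    calc ∑ e ∈ G.edgeFinset, 2 / ((edgeCommonNbrs G e : ℝ) + 2)
        ≤ ∑ e ∈ G.edgeFinset, κ₀⁻¹ * g e := Finset.sum_le_sum hedge
      _ = κ₀⁻¹ * (Fintype.card V : ℝ) := by rw [← Finset.mul_sum, hsum_g]
  unfold alphaParam
  have := mul_le_mul_of_nonneg_left hsum (inv_nonneg.mpr hn.le)
  calc (Fintype.card V : ℝ)⁻¹ * ∑ e ∈ G.edgeFinset, 2 / ((edgeCommonNbrs G e : ℝ) + 2)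
      ≤ (Fintype.card V : ℝ)⁻¹ * (κ₀⁻¹ * (Fintype.card V : ℝ)) := this
    _ = 1 / κ₀ := by field_simp
end

section
/- Let 𝒢 = (V, ℰ) be a hypergraph on n vertices, i.e., ℰ is a finite family of subsets of V, and suppose every vertex of V belongs to at most d hyperedges of ℰ. Let E_G = {(i,j) : i ≠ j and {i,j} ⊆ e for some e ∈ ℰ} (unordered pairs), and for each (i,j) ∈ E_G let 𝒞_ij = Σ_{e∈ℰ : {i,j}⊆e} |e|. Then Σ_{(i,j)∈E_G} 1/𝒞_ij ≤ d·n/2. -/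
open Finset

private lemma hg_double_ite {V : Type*} [Fintype V] [DecidableEq V]
    (e : Finset V) (x : ℝ) :
    ∑ i : V, ∑ j : V, (if i ∈ e ∧ j ∈ e then x else 0)
      = (e.card : ℝ) * (e.card : ℝ) * x := by
  have h1 : ∀ i : V, (∑ j : V, (if i ∈ e ∧ j ∈ e then x else 0))
      = if i ∈ e then (e.card : ℝ) * x else 0 := by
    intro i
    by_cases hi : i ∈ e <;>
      simp [hi, Finset.sum_ite_mem, Finset.univ_inter, Finset.sum_const, nsmul_eq_mul]
  simp only [h1]
  simp [Finset.sum_ite_mem, Finset.univ_inter, Finset.sum_const, nsmul_eq_mul, mul_assoc]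

/-- Let `𝒢 = (V, ℰ)` be a hypergraph (a finite family `ℰ` of subsets of a
finite vertex set `V`, indexed by `ι`) in which every vertex belongs to at most `d` hyperedges.
For unordered pairs `(i,j)` of distinct vertices contained together in some hyperedge, with
`𝒞_ij = Σ_{e ∈ ℰ, {i,j} ⊆ e} |e|`, we have `Σ_{(i,j) ∈ E_G} 1/𝒞_ij ≤ d n / 2`.
(The sum over unordered pairs is written as half the sum over ordered pairs.) -/
theorem hypergraph_inv_C_sum_le
    {V ι : Type*} [Fintype V] [DecidableEq V] [Fintype ι]
    (ℰ : ι → Finset V) (d : ℕ)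
    (hd : ∀ v : V, (Finset.univ.filter fun a => v ∈ ℰ a).card ≤ d) :
    (1 / 2) * ∑ i : V, ∑ j : V,
        (if i ≠ j ∧ (Finset.univ.filter fun a => i ∈ ℰ a ∧ j ∈ ℰ a).Nonempty then
          ((∑ a ∈ Finset.univ.filter fun a => i ∈ ℰ a ∧ j ∈ ℰ a, ((ℰ a).card : ℝ))⁻¹)
        else 0)
      ≤ (d : ℝ) * (Fintype.card V : ℝ) / 2 := by
  -- Step 1: pointwise bound by sum of inverses
  have key : ∀ i j : V,
      (if i ≠ j ∧ (Finset.univ.filter fun a => i ∈ ℰ a ∧ j ∈ ℰ a).Nonempty then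
          ((∑ a ∈ Finset.univ.filter fun a => i ∈ ℰ a ∧ j ∈ ℰ a, ((ℰ a).card : ℝ))⁻¹)
        else 0)
      ≤ ∑ a ∈ Finset.univ.filter fun a => i ∈ ℰ a ∧ j ∈ ℰ a, ((ℰ a).card : ℝ)⁻¹ := by
    intro i j
    set S := Finset.univ.filter fun a => i ∈ ℰ a ∧ j ∈ ℰ a with hS
    have hpos : ∀ a ∈ S, (0 : ℝ) < (ℰ a).card := by
      intro a ha
      simp only [hS, Finset.mem_filter] at ha
      exact_mod_cast Finset.card_pos.2 ⟨i, ha.2.1⟩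
    split_ifs with h
    · obtain ⟨-, a0, ha0⟩ := h
      calc (∑ a ∈ S, ((ℰ a).card : ℝ))⁻¹
          ≤ ((ℰ a0).card : ℝ)⁻¹ := by
            apply inv_anti₀ (hpos a0 ha0)
            exact Finset.single_le_sum (fun a ha => (hpos a ha).le) ha0
        _ ≤ ∑ a ∈ S, ((ℰ a).card : ℝ)⁻¹ :=
            Finset.single_le_sum (fun a ha => inv_nonneg.2 (hpos a ha).le) ha0
    · exact Finset.sum_nonneg fun a ha => inv_nonneg.2 (hpos a ha).le
  have step1 := Finset.sum_le_sum fun i (_ : i ∈ (univ : Finset V)) =>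
    Finset.sum_le_sum fun j (_ : j ∈ (univ : Finset V)) => key i j
  -- Step 2: evaluate the triple sum
  have step2 : ∑ i : V, ∑ j : V,
      (∑ a ∈ Finset.univ.filter fun a => i ∈ ℰ a ∧ j ∈ ℰ a, ((ℰ a).card : ℝ)⁻¹)
      = ∑ a : ι, (ℰ a).card * (ℰ a).card * ((ℰ a).card : ℝ)⁻¹ := by
    simp only [Finset.sum_filter]
    calc ∑ i : V, ∑ j : V, ∑ a : ι, (if i ∈ ℰ a ∧ j ∈ ℰ a then ((ℰ a).card : ℝ)⁻¹ else 0)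
        = ∑ i : V, ∑ a : ι, ∑ j : V, (if i ∈ ℰ a ∧ j ∈ ℰ a then ((ℰ a).card : ℝ)⁻¹ else 0) :=
          Finset.sum_congr rfl fun i _ => Finset.sum_comm
      _ = ∑ a : ι, ∑ i : V, ∑ j : V, (if i ∈ ℰ a ∧ j ∈ ℰ a then ((ℰ a).card : ℝ)⁻¹ else 0) :=
          Finset.sum_comm
      _ = ∑ a : ι, ((ℰ a).card : ℝ) * (ℰ a).card * ((ℰ a).card : ℝ)⁻¹ :=
          Finset.sum_congr rfl fun a _ => hg_double_ite (ℰ a) _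
  -- Step 3: each summand ≤ card
  have step3 : ∑ a : ι, ((ℰ a).card : ℝ) * (ℰ a).card * ((ℰ a).card : ℝ)⁻¹
      ≤ ∑ a : ι, ((ℰ a).card : ℝ) := by
    apply Finset.sum_le_sum
    intro a _
    rcases eq_or_ne ((ℰ a).card : ℝ) 0 with h | h
    · simp [h]
    · rw [mul_assoc, mul_inv_cancel₀ h, mul_one]
  -- Step 4: double counting degrees
  have step4 : ∑ a : ι, ((ℰ a).card : ℝ) ≤ (d : ℝ) * (Fintype.card V : ℝ) := by
    have hnat : ∑ a : ι, (ℰ a).card ≤ d * Fintype.card V := by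
      have : ∑ a : ι, (ℰ a).card
          = ∑ v : V, (Finset.univ.filter fun a => v ∈ ℰ a).card := by
        simp only [Finset.card_filter]
        rw [Finset.sum_comm]
        congr 1; ext a
        simp [Finset.sum_ite_mem]
      rw [this]
      calc ∑ v : V, (Finset.univ.filter fun a => v ∈ ℰ a).card
          ≤ ∑ _v : V, d := Finset.sum_le_sum fun v _ => hd v
        _ = Fintype.card V * d := by rw [Finset.sum_const, smul_eq_mul, Fintype.card]
        _ = d * Fintype.card V := Nat.mul_comm _ _
    calc ∑ a : ι, ((ℰ a).card : ℝ) = ((∑ a : ι, (ℰ a).card : ℕ) : ℝ) := by push_cast; ring_nf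
      _ ≤ ((d * Fintype.card V : ℕ) : ℝ) := by exact_mod_cast hnat
      _ = (d : ℝ) * (Fintype.card V : ℝ) := by push_cast; ring
  have total := step1.trans (le_of_eq step2) |>.trans (step3.trans step4)
  calc (1 / 2 : ℝ) * _ ≤ (1 / 2 : ℝ) * ((d : ℝ) * (Fintype.card V : ℝ)) := by
        apply mul_le_mul_of_nonneg_left total (by norm_num)
    _ = (d : ℝ) * (Fintype.card V : ℝ) / 2 := by ring
end

section
/- Let G = (V,E) be an undirected connected simple graph on n vertices, let T_ij be the number of common neighbors of adjacent i and j, let α = (1/n)·Σ_{(i,j)∈E} 2/(T_ij+2), and let p_ij = (2/(T_ij+2)) / Σ_{(k,l)∈E} (2/(T_kl+2)). Then for every edge (i,j) ∈ E, (1/p_ij)·(e_i − e_j)^T L_G⁺ (e_i − e_j) ≤ n·α, where L_G⁺ is the Moore–Penrose pseudoinverse of the Laplacian L_G of G. -/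
open Matrix Finset

/-- The sampling probability `p_e = (2/(T_e+2)) / Σ_{e'∈E} 2/(T_{e'}+2)` of an edge `e`. -/
noncomputable def samplingProb {V : Type*} [Fintype V] [DecidableEq V]
    (G : SimpleGraph V) [DecidableRel G.Adj] (e : Sym2 V) : ℝ :=
  (2 / ((edgeCommonNbrs G e : ℝ) + 2)) /
    ∑ e' ∈ G.edgeFinset, 2 / ((edgeCommonNbrs G e' : ℝ) + 2)

/-! With `x = M (e_i - e_j)`, the Penrose identities give `L x = e_i - e_j`, since `e_i - e_j` is
orthogonal to `ker L` (vectors constant along edges). So the effective resistance `R = x_i - x_j`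
equals the Dirichlet energy `xᵀ L x`. The edge `ij` contributes `R²` to it and every common
neighbour `k` contributes `(x_i - x_k)² + (x_k - x_j)² ≥ R² / 2`, whence `R ≥ (1 + T_ij / 2) R²`,
i.e. `R ≤ 2 / (T_ij + 2) = p_ij · n α`. -/

theorem le_div_of_mul_sq_le_mul {a b r : ℝ} (ha : 0 < a) (hb : 0 ≤ b) (h : a * r ^ 2 ≤ b * r) :
    r ≤ b / a := by
  rw [le_div_iff₀ ha]
  rcases le_or_gt r 0 with hr | hr <;> nlinarith

namespace IsMoorePenroseInverse

variable {V : Type*} [Fintype V] [DecidableEq V] {L M : Matrix V V ℝ}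

theorem mul_mul_self_eq (hM : IsMoorePenroseInverse L M) (hL : L.IsSymm) :
    L * (L * M) = L := by
  obtain ⟨hLML, -, hLM, -⟩ := hM
  have := congrArg Matrix.transpose (congrArg (· * L) hLM)
  simpa [Matrix.transpose_mul, hL.eq, hLML, Matrix.mul_assoc] using this

theorem mulVec_mulVec_eq_self (hM : IsMoorePenroseInverse L M) (hL : L.IsSymm) {d : V → ℝ}
    (hd : ∀ w, L *ᵥ w = 0 → d ⬝ᵥ w = 0) : L *ᵥ (M *ᵥ d) = d := by
  set w := d - L *ᵥ (M *ᵥ d)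
  have hLw : L *ᵥ w = 0 := by
    simp only [w, mulVec_sub, mulVec_mulVec, hM.mul_mul_self_eq hL, sub_self]
  have hww : w ⬝ᵥ w = 0 := by
    calc w ⬝ᵥ w = d ⬝ᵥ w - (M *ᵥ d) ⬝ᵥ (L *ᵥ w) := by
          rw [sub_dotProduct, dotProduct_mulVec, ← mulVec_transpose, hL.eq, dotProduct_comm]
      _ = 0 := by rw [hd w hLw, hLw, dotProduct_zero, sub_zero]
  exact (sub_eq_zero.mp (dotProduct_self_eq_zero.mp hww)).symm

end IsMoorePenroseInverse

namespace SimpleGraph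

variable {V : Type*} [Fintype V] [DecidableEq V] {G : SimpleGraph V} [DecidableRel G.Adj]

theorem Adj.single_sub_single_dotProduct_eq_zero_of_lapMatrix_mulVec_eq_zero {i j : V}
    (hadj : G.Adj i j) {w : V → ℝ} (hw : G.lapMatrix ℝ *ᵥ w = 0) :
    (Pi.single i 1 - Pi.single j 1) ⬝ᵥ w = 0 := by
  rw [sub_dotProduct, single_one_dotProduct, single_one_dotProduct,
    (lapMatrix_mulVec_eq_zero_iff_forall_adj G).mp hw i j hadj, sub_self]

/-- Only the rows `i`, `j` and `k ∈ N(i) ∩ N(j)` of the energy are needed: the edge `ij` gives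
`(x i - x j)²` and each triangle `ijk` at least half of that. -/
theorem Adj.edgeCommonNbrs_add_two_mul_sq_le {i j : V} (hadj : G.Adj i j) (x : V → ℝ) :
    ((edgeCommonNbrs G s(i, j) : ℝ) + 2) * (x i - x j) ^ 2 ≤ 2 * (x ⬝ᵥ G.lapMatrix ℝ *ᵥ x) := by
  set f : V → V → ℝ := fun u v => if G.Adj u v then (x u - x v) ^ 2 else 0
  set N := G.neighborFinset i ∩ G.neighborFinset j
  have hf0 : ∀ u v, 0 ≤ f u v := fun u v => by dsimp only [f]; split <;> positivity
  have hiN : i ∉ N := by simp [N]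
  have hjN : j ∉ N := by simp [N]
  have hN : ∀ k ∈ N, G.Adj i k ∧ G.Adj j k := fun k hk => by simpa [N] using hk
  have hrow : ∀ u (s : Finset V), ∑ v ∈ s, f u v ≤ ∑ v, f u v :=
    fun u _ => sum_le_univ_sum_of_nonneg (hf0 u)
  have htotal := sum_le_univ_sum_of_nonneg (f := fun u => ∑ v, f u v)
    (s := insert i (insert j N)) fun u => sum_nonneg fun v _ => hf0 u v
  rw [sum_insert (by simp [hiN, hadj.ne]), sum_insert hjN] at htotal
  have hrow_i : f i j + ∑ k ∈ N, f i k ≤ ∑ v, f i v := by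
    rw [← sum_insert hjN]; exact hrow i _
  have hrow_j : f j i + ∑ k ∈ N, f j k ≤ ∑ v, f j v := by
    rw [← sum_insert hiN]; exact hrow j _
  have hrows_N : ∑ k ∈ N, (f k i + f k j) ≤ ∑ k ∈ N, ∑ v, f k v :=
    sum_le_sum fun k _ => by simpa [sum_pair hadj.ne] using hrow k {i, j}
  have htriangle : ∀ k ∈ N, (x i - x j) ^ 2 ≤ f i k + f j k + (f k i + f k j) := by
    intro k hk
    obtain ⟨hik, hjk⟩ := hN k hk
    simp only [f, hik, hjk, hik.symm, hjk.symm, if_true]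
    nlinarith [sq_nonneg (x i + x j - 2 * x k)]
  have htriangles := sum_le_sum htriangle
  rw [sum_const, nsmul_eq_mul, sum_add_distrib, sum_add_distrib] at htriangles
  have hfij : f i j = (x i - x j) ^ 2 := if_pos hadj
  have hfji : f j i = (x i - x j) ^ 2 := by simp only [f, if_pos hadj.symm]; ring
  have henergy : 2 * (x ⬝ᵥ G.lapMatrix ℝ *ᵥ x) = ∑ u, ∑ v, f u v := by
    rw [← toLinearMap₂'_apply', lapMatrix_toLinearMap₂' ℝ G x]; ring
  change ((#N : ℕ) + 2 : ℝ) * _ ≤ _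
  linarith

theorem Adj.single_sub_single_dotProduct_mulVec_le {i j : V} (hadj : G.Adj i j)
    {M : Matrix V V ℝ} (hM : IsMoorePenroseInverse (G.lapMatrix ℝ) M) :
    (Pi.single i 1 - Pi.single j 1) ⬝ᵥ M *ᵥ (Pi.single i 1 - Pi.single j 1)
      ≤ 2 / ((edgeCommonNbrs G s(i, j) : ℝ) + 2) := by
  set d : V → ℝ := Pi.single i 1 - Pi.single j 1
  set x := M *ᵥ d
  have hLx : G.lapMatrix ℝ *ᵥ x = d := hM.mulVec_mulVec_eq_self (G.isSymm_lapMatrix ℝ)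
    fun _ => hadj.single_sub_single_dotProduct_eq_zero_of_lapMatrix_mulVec_eq_zero
  have hdx : d ⬝ᵥ x = x i - x j := by
    rw [sub_dotProduct, single_one_dotProduct, single_one_dotProduct]
  have henergy : x ⬝ᵥ G.lapMatrix ℝ *ᵥ x = x i - x j := by rw [hLx, dotProduct_comm, hdx]
  rw [hdx]
  refine le_div_of_mul_sq_le_mul (by positivity) zero_le_two ?_
  simpa [henergy] using hadj.edgeCommonNbrs_add_two_mul_sq_le x

end SimpleGraph

theorem inv_samplingProb {V : Type*} [Fintype V] [DecidableEq V] (G : SimpleGraph V)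
    [DecidableRel G.Adj] (e : Sym2 V) :
    (samplingProb G e)⁻¹ = ((edgeCommonNbrs G e : ℝ) + 2) / 2 *
      ∑ e' ∈ G.edgeFinset, 2 / ((edgeCommonNbrs G e' : ℝ) + 2) := by
  rw [samplingProb, inv_div, div_div_eq_mul_div, mul_comm]; ring

theorem card_mul_alphaParam {V : Type*} [Fintype V] [Nonempty V] [DecidableEq V]
    (G : SimpleGraph V) [DecidableRel G.Adj] :
    (Fintype.card V : ℝ) * alphaParam G =
      ∑ e ∈ G.edgeFinset, 2 / ((edgeCommonNbrs G e : ℝ) + 2) := by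
  rw [alphaParam, ← mul_assoc, mul_inv_cancel₀ (by positivity), one_mul]

theorem inv_prob_mul_effective_resistance_le_general
    {V : Type*} [Fintype V] [DecidableEq V]
    (G : SimpleGraph V) [DecidableRel G.Adj]
    (i j : V) (hadj : G.Adj i j)
    (M : Matrix V V ℝ) (hM : IsMoorePenroseInverse (G.lapMatrix ℝ) M) :
    (samplingProb G s(i, j))⁻¹ *
        ((Pi.single i 1 - Pi.single j 1) ⬝ᵥ M *ᵥ (Pi.single i 1 - Pi.single j 1))
      ≤ (Fintype.card V : ℝ) * alphaParam G := by
  have : Nonempty V := ⟨i⟩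
  have hT : (0 : ℝ) < edgeCommonNbrs G s(i, j) + 2 := by positivity
  have hR := hadj.single_sub_single_dotProduct_mulVec_le hM
  rw [le_div_iff₀ hT] at hR
  rw [inv_samplingProb, card_mul_alphaParam]
  set R := (Pi.single i 1 - Pi.single j 1) ⬝ᵥ M *ᵥ (Pi.single i 1 - Pi.single j 1)
  set S := ∑ e ∈ G.edgeFinset, 2 / ((edgeCommonNbrs G e : ℝ) + 2)
  have hS : 0 ≤ S := sum_nonneg fun e _ => by positivity
  calc (edgeCommonNbrs G s(i, j) + 2) / 2 * S * R
        = S * (R * (edgeCommonNbrs G s(i, j) + 2) / 2) := by ring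
    _ ≤ S * (2 / 2) := by gcongr
    _ = S := by norm_num

/-- For every edge `(i,j)` of a connected graph `G`,
`(1/p_ij) (e_i − e_j)ᵀ L_G⁺ (e_i − e_j) ≤ n α`. -/
theorem inv_prob_mul_effective_resistance_le
    {V : Type*} [Fintype V] [DecidableEq V]
    (G : SimpleGraph V) [DecidableRel G.Adj] (hconn : G.Connected)
    (i j : V) (hadj : G.Adj i j)
    (M : Matrix V V ℝ) (hM : IsMoorePenroseInverse (G.lapMatrix ℝ) M) :
    (samplingProb G s(i, j))⁻¹ *
        ((Pi.single i 1 - Pi.single j 1) ⬝ᵥ M *ᵥ (Pi.single i 1 - Pi.single j 1))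
      ≤ (Fintype.card V : ℝ) * alphaParam G :=
  inv_prob_mul_effective_resistance_le_general G i j hadj M hM
end
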